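/- Fix k ∈ ℕ. With N_k(m,n) as above, for all integers m with n/2 < m < n - k, one has N_k(m,n) - N_k(m+1,n) = p(ℓ+1) - 2 p(ℓ) + p(ℓ-1) ≥ 0, where ℓ = n - k - m and p is the partition function. In particular N_k(m,n) ≥ N_k(m+1,n) in this range. -/

import Mathlib

open scoped BigOperators

/-- Partition function `p`, extended by `0` to negative integers. -/
noncomputable def partFun (n : ℤ) : ℤ :=
  if 0 ≤ n then (Fintype.card (Nat.Partition n.toNat) : ℤ) else 0

/-- `I_k(m,n)`: the coefficient of `qⁿ` in
`(∏_{j≥1}(1-q^j))^{-1} ∑_{ℓ≥1}(-1)^{ℓ-1} q^{ℓ((2k-1)ℓ-1)/2+mℓ}`,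
written out via `∑ p(n)qⁿ = ∏(1-q^j)^{-1}`. -/
noncomputable def Ik (k m n : ℕ) : ℤ :=
  ∑ ℓ ∈ Finset.Icc 1 (n + 1), (-1 : ℤ) ^ (ℓ - 1) *
    partFun ((n : ℤ) - ((2 * (k : ℤ) - 1) * (ℓ : ℤ) ^ 2 - (ℓ : ℤ)) / 2 - (m : ℤ) * (ℓ : ℤ))

/-- `N_k(m,n) = I_k(|m|,n) - I_k(|m|+1,n)`. -/
noncomputable def Nk (k : ℕ) (m : ℤ) (n : ℕ) : ℤ :=
  Ik k m.natAbs n - Ik k (m.natAbs + 1) n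

/-!
For `2m > n` every term `ℓ ≥ 2` of the series defining `I_k(m,n)` has exponent beyond `n`, so
`N_k(m,n) = p(n-k+1-m) - p(n-k-m)` and `N_k(m,n) - N_k(m+1,n)` is a second difference of `p`.
It is nonnegative because `p(j+1) - p(j)` counts the partitions of `j+1` without a part `1`, and
adding `1` to a largest part injects those of `j` into those of `j+1` when `j ≥ 1`.
-/

theorem Multiset.sup_mem_of_ne_zero {α : Type*} [LinearOrder α] [OrderBot α] {s : Multiset α}
    (hs : s ≠ 0) : s.sup ∈ s := by
  induction s using Multiset.induction with
  | empty => exact absurd rfl hs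
  | cons a s ih =>
    rw [Multiset.sup_cons]
    rcases eq_or_ne s 0 with rfl | hs'
    · simp
    · exact sup_ind a s.sup (Multiset.mem_cons_self a s) (Multiset.mem_cons_of_mem (ih hs'))

namespace Nat.Partition

def incrLargestPart {n : ℕ} (π : n.Partition) : (n + 1).Partition where
  parts := (π.parts.sup + 1) ::ₘ π.parts.erase π.parts.sup
  parts_pos := by
    intro i hi
    rcases Multiset.mem_cons.1 hi with rfl | hi
    · omega
    · exact π.parts_pos (Multiset.mem_of_mem_erase hi)
  parts_sum := by
    rcases eq_or_ne π.parts 0 with h | h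
    -- for `n = 0` the largest part is the junk value `⊥ = 0` and the result is `{1}`
    · have := π.parts_sum
      simp_all
    · have := congrArg Multiset.sum (Multiset.cons_erase (Multiset.sup_mem_of_ne_zero h))
      rw [Multiset.sum_cons, π.parts_sum] at this
      rw [Multiset.sum_cons]
      omega

theorem parts_ne_zero {n : ℕ} (hn : n ≠ 0) (π : n.Partition) : π.parts ≠ 0 := by
  rintro h
  have := π.parts_sum
  simp_all

theorem sup_parts_incrLargestPart {n : ℕ} (π : n.Partition) :
    π.incrLargestPart.parts.sup = π.parts.sup + 1 := by
  have : (π.parts.erase π.parts.sup).sup ≤ π.parts.sup :=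
    Multiset.sup_le.2 fun b hb => Multiset.le_sup (Multiset.mem_of_mem_erase hb)
  simp only [incrLargestPart, Multiset.sup_cons]
  exact sup_eq_left.2 (this.trans (Nat.le_succ _))

theorem incrLargestPart_injective {n : ℕ} (hn : n ≠ 0) :
    Function.Injective (incrLargestPart (n := n)) := by
  intro π₁ π₂ h
  have hsup : π₁.parts.sup = π₂.parts.sup := by
    have := congrArg (fun π => π.parts.sup) h
    simp only [sup_parts_incrLargestPart] at this
    omega
  have herase : π₁.parts.erase π₁.parts.sup = π₂.parts.erase π₂.parts.sup := by
    have := congrArg (fun π => π.parts) h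
    simpa [incrLargestPart, hsup] using this
  ext1
  rw [← Multiset.cons_erase (Multiset.sup_mem_of_ne_zero (parts_ne_zero hn π₁)),
    ← Multiset.cons_erase (Multiset.sup_mem_of_ne_zero (parts_ne_zero hn π₂)), herase, hsup]

theorem one_notMem_parts_incrLargestPart {n : ℕ} (hn : n ≠ 0) {π : n.Partition}
    (h : 1 ∉ π.parts) : 1 ∉ π.incrLargestPart.parts := by
  have hpos := π.parts_pos (Multiset.sup_mem_of_ne_zero (parts_ne_zero hn π))
  simp only [incrLargestPart, Multiset.mem_cons, not_or]
  exact ⟨by omega, fun h' => h (Multiset.mem_of_mem_erase h')⟩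

theorem card_succ_eq_card_add_card_one_notMem (n : ℕ) :
    Fintype.card (n + 1).Partition =
      Fintype.card n.Partition + Fintype.card {π : (n + 1).Partition // 1 ∉ π.parts} := by
  have hwith : Fintype.card {π : (n + 1).Partition // 1 ∈ π.parts} = Fintype.card n.Partition :=
    Fintype.card_congr (partitionWithPartEquiv le_rfl (Nat.le_add_left 1 n))
  rw [← hwith, ← Fintype.card_sum]
  exact Fintype.card_congr (Equiv.sumCompl _).symm

theorem card_one_notMem_le_succ {n : ℕ} (hn : n ≠ 0) :
    Fintype.card {π : n.Partition // 1 ∉ π.parts} ≤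
      Fintype.card {π : (n + 1).Partition // 1 ∉ π.parts} :=
  Fintype.card_le_of_injective
    (Subtype.map incrLargestPart fun _ => one_notMem_parts_incrLargestPart hn)
    (Subtype.map_injective _ (incrLargestPart_injective hn))

theorem two_mul_card_le_card_add_card (n : ℕ) :
    2 * Fintype.card (n + 1).Partition ≤
      Fintype.card (n + 1 + 1).Partition + Fintype.card n.Partition := by
  have hn := card_succ_eq_card_add_card_one_notMem n
  have hn1 := card_succ_eq_card_add_card_one_notMem (n + 1)
  have hmono := card_one_notMem_le_succ n.add_one_ne_zero
  omega

end Nat.Partition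

theorem partFun_natCast (n : ℕ) : partFun n = Fintype.card n.Partition := by
  simp [partFun]

theorem partFun_of_neg {x : ℤ} (hx : x < 0) : partFun x = 0 :=
  if_neg hx.not_ge

theorem two_mul_partFun_le {x : ℤ} (hx : 1 ≤ x) :
    2 * partFun x ≤ partFun (x + 1) + partFun (x - 1) := by
  obtain ⟨n, rfl⟩ : ∃ n : ℕ, x = n + 1 := ⟨(x - 1).toNat, by omega⟩
  have hconv := Nat.Partition.two_mul_card_le_card_add_card n
  have h₀ := partFun_natCast n
  have h₁ := partFun_natCast (n + 1)
  have h₂ := partFun_natCast (n + 1 + 1)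
  push_cast at h₀ h₁ h₂
  rw [add_sub_cancel_right, h₀, h₁, h₂]
  exact_mod_cast hconv

theorem Ik_eq_partFun {k m n : ℕ} (hk : 1 ≤ k) (hmn : n < 2 * m) :
    Ik k m n = partFun (n - (k - 1 + m)) := by
  rw [Ik, Finset.sum_eq_single_of_mem 1 (by simp)]
  · rw [Nat.sub_self, pow_zero, one_mul]
    congr 1
    push_cast
    omega
  · intro ℓ hℓ hℓ1
    have hℓ2 : (2 : ℤ) ≤ ℓ := by
      have := (Finset.mem_Icc.1 hℓ).1
      omega
    have hquad : 0 ≤ ((2 * (k : ℤ) - 1) * (ℓ : ℤ) ^ 2 - (ℓ : ℤ)) / 2 := by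
      have : (1 : ℤ) ≤ 2 * k - 1 := by omega
      exact Int.ediv_nonneg (by nlinarith) zero_le_two
    have hlin : (n : ℤ) < m * ℓ := by
      have : (n : ℤ) < 2 * m := by exact_mod_cast hmn
      nlinarith
    rw [partFun_of_neg (by omega), mul_zero]

theorem Nk_eq_of_lt {k : ℕ} (hk : 1 ≤ k) {m : ℤ} {n : ℕ} (hmn : (n : ℤ) < 2 * m) :
    Nk k m n = partFun (n - (k - 1 + m)) - partFun (n - (k + m)) := by
  lift m to ℕ using (by omega)
  rw [Nk, Int.natAbs_natCast, Ik_eq_partFun hk (by omega), Ik_eq_partFun hk (by omega)]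
  push_cast
  ring_nf

/-- For `n/2 < m < n - k`, with `ℓ = n - k - m`:
`N_k(m,n) - N_k(m+1,n) = p(ℓ+1) - 2p(ℓ) + p(ℓ-1) ≥ 0`;
in particular `N_k(m,n) ≥ N_k(m+1,n)`. -/
theorem Nk_diff_convex (k : ℕ) (hk : 1 ≤ k) (n : ℕ) (m : ℤ)
    (hm₁ : (n : ℤ) < 2 * m) (hm₂ : m < (n : ℤ) - k) :
    Nk k m n - Nk k (m + 1) n =
        partFun (((n : ℤ) - k - m) + 1) - 2 * partFun ((n : ℤ) - k - m)
          + partFun (((n : ℤ) - k - m) - 1) ∧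
      0 ≤ Nk k m n - Nk k (m + 1) n := by
  have hdiff : Nk k m n - Nk k (m + 1) n =
      partFun (((n : ℤ) - k - m) + 1) - 2 * partFun ((n : ℤ) - k - m)
        + partFun (((n : ℤ) - k - m) - 1) := by
    rw [Nk_eq_of_lt hk hm₁, Nk_eq_of_lt hk (by omega)]
    rw [show (n : ℤ) - (k - 1 + m) = n - k - m + 1 by ring,
      show (n : ℤ) - (k + m) = n - k - m by ring,
      show (n : ℤ) - (k - 1 + (m + 1)) = n - k - m by ring,
      show (n : ℤ) - (k + (m + 1)) = n - k - m - 1 by ring]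
    ring
  refine ⟨hdiff, ?_⟩
  have hconv := two_mul_partFun_le (x := (n : ℤ) - k - m) (by omega)
  linarith
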